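/- arXiv:1105.1218 — 5 statements merged into one kernel-verified Lean document; each statement's English description precedes it below -/
import Mathlib

section
/- Let ℏ > 0, m ≥ 1, C ∈ M_m(ℂ), and let f(u,v) = exp(−(2/(iℏ)) ∑_{k,l} C_{kl} u_k v_l) on ℂ^{2m}. The ΨDO product series f *_{K₀} f converges pointwise on all of ℂ^{2m} and equals exp((2/(iℏ)) ∑_{k,l} (2C² − 2C)_{kl} u_k v_l); in particular f *_{K₀} f is the constant function 1 if and only if C² = C. -/
/-!
A function `(u, v) ↦ exp (uᵀ A v)` is an eigenfunction of every partial derivative: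
`∂_{v_j}` multiplies it by `(uᵀ A)_j` and `∂_{u_j}` by `(A v)_j`. Hence the `k`-th term of the
ΨDO product of `exp (uᵀ A v)` and `exp (uᵀ B v)` is `exp (uᵀ (A + B) v) (iℏ uᵀ A B v)ᵏ / k!`, and the
series sums to `exp (uᵀ (A + B + iℏ A B) v)`. For `A = B = -(2/(iℏ)) C` this is the claimed
exponential. Conversely, evaluating at `u = t eₖ`, `v = e_l` turns `exp (c uᵀ M v) ≡ 1` into
`exp (c M_{kl} t) = 1` for all `t ∈ ℂ`, which forces `M_{kl} = 0`.
-/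

/-- Functions on `ℂ^{2m}`, written as functions of `(u, v)` with `u, v : Fin m → ℂ`. -/
abbrev HolFn (m : ℕ) := (Fin m → ℂ) → (Fin m → ℂ) → ℂ

/-- Partial derivative `∂_{u_j}`. -/
noncomputable def pdU (m : ℕ) (j : Fin m) (f : HolFn m) : HolFn m :=
  fun u v => fderiv ℂ (fun w => f w v) u (Pi.single j 1)

/-- Partial derivative `∂_{v_j}`. -/
noncomputable def pdV (m : ℕ) (j : Fin m) (f : HolFn m) : HolFn m :=
  fun u v => fderiv ℂ (fun w => f u w) v (Pi.single j 1)

/-- Iterated partial derivatives along a list of indices. -/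
noncomputable def iterD (m : ℕ) (pd : Fin m → HolFn m → HolFn m)
    (l : List (Fin m)) (f : HolFn m) : HolFn m :=
  l.foldr pd f

/-- The `k`-th term of the ΨDO (normal ordered) product series of `f` and `g`
at the point `(u, v)`:
`((iℏ)^k/k!) ∑_{j₁,…,j_k} (∂_{v_{j₁}}⋯∂_{v_{j_k}} f)·(∂_{u_{j₁}}⋯∂_{u_{j_k}} g)`. -/
noncomputable def psidoTerm (ℏ : ℝ) (m : ℕ) (f g : HolFn m)
    (u v : Fin m → ℂ) (k : ℕ) : ℂ :=
  ((Complex.I * ℏ) ^ k / (k.factorial : ℂ)) *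
    ∑ j : Fin k → Fin m,
      iterD m (pdV m) (List.ofFn j) f u v * iterD m (pdU m) (List.ofFn j) g u v

/-- `f(u,v) = exp(−(2/(iℏ)) ∑ C_{kl} u_k v_l)`. -/
noncomputable def gaussC (ℏ : ℝ) (m : ℕ) (C : Matrix (Fin m) (Fin m) ℂ) : HolFn m :=
  fun u v => Complex.exp (-(2 / (Complex.I * ℏ)) * ∑ k, ∑ l, C k l * u k * v l)

open Matrix Complex

theorem hasFDerivAt_dotProduct {𝕜 ι : Type*} [NontriviallyNormedField 𝕜] [Fintype ι]
    (a v : ι → 𝕜) :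
    HasFDerivAt (fun w => a ⬝ᵥ w) (∑ i, a i • ContinuousLinearMap.proj i : (ι → 𝕜) →L[𝕜] 𝕜) v := by
  convert (∑ i, a i • ContinuousLinearMap.proj i : (ι → 𝕜) →L[𝕜] 𝕜).hasFDerivAt using 1
  ext w
  simp [dotProduct]

theorem fderiv_exp_dotProduct_single {ι : Type*} [Fintype ι] [DecidableEq ι] (a v : ι → ℂ)
    (j : ι) : fderiv ℂ (fun w => exp (a ⬝ᵥ w)) v (Pi.single j 1) = a j * exp (a ⬝ᵥ v) := by
  rw [(hasFDerivAt_dotProduct a v).cexp.fderiv]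
  simp [Pi.single_apply, mul_comm]

theorem sum_sum_mul_eq_dotProduct_mulVec {ι R : Type*} [Fintype ι] [CommSemiring R]
    (A : Matrix ι ι R) (u v : ι → R) :
    ∑ k, ∑ l, A k l * u k * v l = u ⬝ᵥ A *ᵥ v := by
  rw [dot_mulVec_eq_sum_sum, Finset.sum_comm]
  simp only [mul_comm (A _ _)]

theorem forall_exp_mul_eq_one_iff (a : ℂ) : (∀ t : ℂ, exp (a * t) = 1) ↔ a = 0 := by
  refine ⟨fun h => by_contra fun ha => ?_, fun ha t => by simp [ha]⟩
  have := h (Real.pi * I / a)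
  rw [mul_div_cancel₀ _ ha, exp_pi_mul_I] at this
  norm_num at this

theorem forall_exp_mul_dotProduct_mulVec_eq_one_iff {ι : Type*} [Fintype ι] [DecidableEq ι]
    {c : ℂ} (hc : c ≠ 0) (M : Matrix ι ι ℂ) :
    (∀ u v : ι → ℂ, exp (c * (u ⬝ᵥ M *ᵥ v)) = 1) ↔ M = 0 := by
  refine ⟨fun h => ?_, fun hM u v => by simp [hM]⟩
  ext k l
  have hkl : ∀ t : ℂ, exp (c * M k l * t) = 1 := fun t => by
    simpa [mulVec_single_one, mul_assoc, mul_comm t] using h (Pi.single k t) (Pi.single l 1)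
  simpa [hc] using (forall_exp_mul_eq_one_iff _).1 hkl

noncomputable def expBilin {m : ℕ} (A : Matrix (Fin m) (Fin m) ℂ) : HolFn m :=
  fun u v => exp (u ⬝ᵥ A *ᵥ v)

section

variable {m : ℕ}

theorem expBilin_smul_apply (c : ℂ) (A : Matrix (Fin m) (Fin m) ℂ) (u v : Fin m → ℂ) :
    expBilin (c • A) u v = exp (c * (u ⬝ᵥ A *ᵥ v)) := by
  rw [expBilin, smul_mulVec, dotProduct_smul, smul_eq_mul]

theorem iterD_pdU_eq_flip (l : List (Fin m)) (f : HolFn m) :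
    iterD m (pdU m) l f = flip (iterD m (pdV m) l (flip f)) := by
  induction l with
  | nil => rfl
  | cons j l ih => exact congrArg (pdU m j) ih

theorem flip_expBilin (A : Matrix (Fin m) (Fin m) ℂ) : flip (expBilin A) = expBilin Aᵀ := by
  ext v u
  simp only [flip, expBilin, dotProduct_mulVec, vecMul_transpose, dotProduct_comm]

theorem iterD_pdV_expBilin (A : Matrix (Fin m) (Fin m) ℂ) (l : List (Fin m)) :
    iterD m (pdV m) l (expBilin A) = fun u v => (l.map (u ᵥ* A)).prod * expBilin A u v := by
  induction l with
  | nil => ext; simp [iterD]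
  | cons j l ih =>
    show pdV m j (iterD m (pdV m) l (expBilin A)) = _
    ext u v
    simp only [ih, pdV, expBilin, dotProduct_mulVec]
    rw [fderiv_const_mul (hasFDerivAt_dotProduct _ v).cexp.differentiableAt,
      _root_.smul_apply, fderiv_exp_dotProduct_single, smul_eq_mul,
      List.map_cons, List.prod_cons]
    ring

theorem iterD_pdU_expBilin (A : Matrix (Fin m) (Fin m) ℂ) (l : List (Fin m)) :
    iterD m (pdU m) l (expBilin A) = fun u v => (l.map (A *ᵥ v)).prod * expBilin A u v := by
  rw [iterD_pdU_eq_flip, flip_expBilin, iterD_pdV_expBilin]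
  ext u v
  simp only [flip, vecMul_transpose, ← flip_expBilin]

theorem psidoTerm_expBilin (ℏ : ℝ) (A B : Matrix (Fin m) (Fin m) ℂ) (u v : Fin m → ℂ) (k : ℕ) :
    psidoTerm ℏ m (expBilin A) (expBilin B) u v k =
      expBilin A u v * expBilin B u v * ((I * ℏ * (u ⬝ᵥ (A * B) *ᵥ v)) ^ k / k.factorial) := by
  have hsum : ∑ j : Fin k → Fin m,
      (∏ t, (u ᵥ* A) (j t)) * expBilin A u v * ((∏ t, (B *ᵥ v) (j t)) * expBilin B u v) =
        expBilin A u v * expBilin B u v * (u ᵥ* A ⬝ᵥ B *ᵥ v) ^ k := by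
    rw [dotProduct, Fintype.sum_pow, Finset.mul_sum]
    refine Finset.sum_congr rfl fun j _ => ?_
    rw [Finset.prod_mul_distrib]
    ring
  simp only [psidoTerm, iterD_pdV_expBilin, iterD_pdU_expBilin, List.map_ofFn, List.prod_ofFn,
    Function.comp_apply]
  rw [hsum, ← dotProduct_mulVec, mulVec_mulVec]
  ring

theorem hasSum_psidoTerm_expBilin (ℏ : ℝ) (A B : Matrix (Fin m) (Fin m) ℂ) (u v : Fin m → ℂ) :
    HasSum (psidoTerm ℏ m (expBilin A) (expBilin B) u v)
      (expBilin (A + B + (I * ℏ) • (A * B)) u v) := by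
  have hexp : expBilin (A + B + (I * ℏ) • (A * B)) u v =
      expBilin A u v * expBilin B u v * exp (I * ℏ * (u ⬝ᵥ (A * B) *ᵥ v)) := by
    simp only [expBilin, ← exp_add, add_mulVec, smul_mulVec, dotProduct_add, dotProduct_smul,
      smul_eq_mul]
  have h := (NormedSpace.expSeries_div_hasSum_exp (I * ℏ * (u ⬝ᵥ (A * B) *ᵥ v))).mul_left
    (expBilin A u v * expBilin B u v)
  rw [← exp_eq_exp_ℂ, ← hexp, ← funext (psidoTerm_expBilin ℏ A B u v)] at h
  exact h

end

theorem gaussC_eq_expBilin (ℏ : ℝ) (m : ℕ) (C : Matrix (Fin m) (Fin m) ℂ) :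
    gaussC ℏ m C = expBilin (-(2 / (I * ℏ)) • C) := by
  ext u v
  rw [gaussC, expBilin_smul_apply, sum_sum_mul_eq_dotProduct_mulVec]

theorem neg_two_div_smul_add_self_add_smul_mul_self {ι : Type*} [Fintype ι] {s : ℂ} (hs : s ≠ 0)
    (C : Matrix ι ι ℂ) :
    -(2 / s) • C + -(2 / s) • C + s • (-(2 / s) • C * -(2 / s) • C) =
      (2 / s) • ((2 : ℂ) • (C * C) - (2 : ℂ) • C) := by
  rw [smul_mul_smul_comm, smul_smul]
  ext i j
  simp only [Matrix.add_apply, Matrix.sub_apply, Matrix.smul_apply, smul_eq_mul]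
  field_simp
  ring

theorem statement1_general (ℏ : ℝ) (hℏ : 0 < ℏ) (m : ℕ)
    (C : Matrix (Fin m) (Fin m) ℂ) :
    (∀ u v : Fin m → ℂ,
      HasSum (psidoTerm ℏ m (gaussC ℏ m C) (gaussC ℏ m C) u v)
        (Complex.exp ((2 / (Complex.I * ℏ)) *
          ∑ k, ∑ l, ((2 : ℂ) • (C * C) - (2 : ℂ) • C) k l * u k * v l))) ∧
    ((∀ u v : Fin m → ℂ,
        Complex.exp ((2 / (Complex.I * ℏ)) *
          ∑ k, ∑ l, ((2 : ℂ) • (C * C) - (2 : ℂ) • C) k l * u k * v l) = 1)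
      ↔ C * C = C) := by
  have hI : I * ℏ ≠ 0 := mul_ne_zero I_ne_zero (ofReal_ne_zero.2 hℏ.ne')
  simp only [sum_sum_mul_eq_dotProduct_mulVec]
  refine ⟨fun u v => ?_, ?_⟩
  · rw [← expBilin_smul_apply, ← neg_two_div_smul_add_self_add_smul_mul_self hI,
      gaussC_eq_expBilin]
    exact hasSum_psidoTerm_expBilin ℏ _ _ u v
  · rw [forall_exp_mul_dotProduct_mulVec_eq_one_iff (div_ne_zero two_ne_zero hI), sub_eq_zero,
      smul_right_inj two_ne_zero]

theorem statement1 (ℏ : ℝ) (hℏ : 0 < ℏ) (m : ℕ) (hm : 1 ≤ m)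
    (C : Matrix (Fin m) (Fin m) ℂ) :
    (∀ u v : Fin m → ℂ,
      HasSum (psidoTerm ℏ m (gaussC ℏ m C) (gaussC ℏ m C) u v)
        (Complex.exp ((2 / (Complex.I * ℏ)) *
          ∑ k, ∑ l, ((2 : ℂ) • (C * C) - (2 : ℂ) • C) k l * u k * v l))) ∧
    ((∀ u v : Fin m → ℂ,
        Complex.exp ((2 / (Complex.I * ℏ)) *
          ∑ k, ∑ l, ((2 : ℂ) • (C * C) - (2 : ℂ) • C) k l * u k * v l) = 1)
      ↔ C * C = C) :=
  statement1_general ℏ hℏ m C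
end

section
/- Let ℏ > 0, m ≥ 1, C ∈ M_m(ℂ), and define F : ℂ × ℂ^m × ℂ^m → ℂ by F(t,u,v) = exp((1/(iℏ)) ∑_{k,l} (e^{itC} − I)_{kl} u_k v_l), where e^{itC} is the matrix exponential. Then F(0,u,v) = 1 identically and F solves the evolution equation ∂_t F(t,u,v) = (i/(iℏ)) [ (∑_{k,l} C_{kl} u_k v_l)·F(t,u,v) + iℏ ∑_{j=1}^m (∑_k C_{kj} u_k) ∂_{u_j}F(t,u,v) ]. (The right-hand side is (i/(iℏ)) times the finite ΨDO product of the quadratic polynomial ∑ C_{kl}u_kv_l with F, so F is the normal ordered expression of the star-exponential e_*^{(it/(iℏ)) ∑ C_{kl} ũ_k * ṽ_l}.) -/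
/-- The normal ordered expression of the star-exponential
`e_*^{(it/(iℏ)) ∑ C_{kl} ũ_k * ṽ_l}`, namely
`F(t,u,v) = exp((1/(iℏ)) ∑ (e^{itC} − I)_{kl} u_k v_l)` with `e^{itC}` the
matrix exponential. -/
noncomputable def starExpC (ℏ : ℝ) (m : ℕ) (C : Matrix (Fin m) (Fin m) ℂ)
    (t : ℂ) : HolFn m :=
  fun u v => Complex.exp ((1 / (Complex.I * ℏ)) *
    ∑ k, ∑ l, (NormedSpace.exp ((Complex.I * t) • C) - 1) k l * u k * v l)

/-!
With `E(t) = e^{itC}` the exponent of `F` is `(1/(iℏ)) u ⬝ᵥ (E(t) - 1) v`. Since `E' = i C E`,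
`∂_t F = F · (1/(iℏ)) · i u ⬝ᵥ C E(t) v`, while `∂_{u_j} F = (1/(iℏ)) ((E(t) - 1) v)_j F`.
Hence the right-hand side is `(i/(iℏ)) F (u ⬝ᵥ C v + u ⬝ᵥ C (E(t) - 1) v) = (i/(iℏ)) F u ⬝ᵥ C E(t) v`,
which is `∂_t F`; at `t = 0`, `E = 1` and the exponent vanishes.
-/

open Matrix

theorem sum_sum_mul_mul_eq_dotProduct_mulVec {R m n : Type*} [CommSemiring R] [Fintype m]
    [Fintype n] (A : Matrix m n R) (u : m → R) (v : n → R) :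
    ∑ k, ∑ l, A k l * u k * v l = u ⬝ᵥ (A *ᵥ v) := by
  simp only [dotProduct, mulVec, Finset.mul_sum]
  exact Finset.sum_congr rfl fun k _ => Finset.sum_congr rfl fun l _ => by ring

theorem sum_vecMul_mul_eq_dotProduct_mulVec {R n : Type*} [CommSemiring R] [Fintype n]
    (A : Matrix n n R) (u w : n → R) :
    ∑ j, (∑ k, A k j * u k) * w j = u ⬝ᵥ (A *ᵥ w) := by
  simp only [Finset.sum_mul]
  rw [Finset.sum_comm, sum_sum_mul_mul_eq_dotProduct_mulVec]

theorem hasDerivAt_dotProduct_exp_smul_mulVec {𝕂 n : Type*} [RCLike 𝕂] [Fintype n]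
    [DecidableEq n] (a : 𝕂) (C : Matrix n n 𝕂) (u v : n → 𝕂) (t : 𝕂) :
    HasDerivAt (fun s => u ⬝ᵥ (NormedSpace.exp ((a * s) • C) *ᵥ v))
      (a * u ⬝ᵥ ((C * NormedSpace.exp ((a * t) • C)) *ᵥ v)) t := by
  -- Matrices carry no global norm; any submultiplicative one will do. Completeness has to be
  -- stated for its uniformity, which agrees with the product one only after unfolding.
  let _ : NormedRing (Matrix n n 𝕂) := Matrix.linftyOpNormedRing
  let _ : NormedAlgebra 𝕂 (Matrix n n 𝕂) := Matrix.linftyOpNormedAlgebra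
  have : @CompleteSpace (Matrix n n 𝕂) PseudoMetricSpace.toUniformSpace :=
    FiniteDimensional.complete 𝕂 _
  let L : Matrix n n 𝕂 →L[𝕂] 𝕂 := LinearMap.toContinuousLinearMap
    { toFun := fun M => u ⬝ᵥ (M *ᵥ v)
      map_add' := fun M N => by simp [add_mulVec, dotProduct_add]
      map_smul' := fun c M => by simp [smul_mulVec, dotProduct_smul] }
  have hexp := (hasDerivAt_exp_smul_const' (𝕂 := 𝕂) C (a * t)).scomp t
    ((hasDerivAt_id t).const_mul a)
  refine (L.hasFDerivAt.comp_hasDerivAt t hexp).congr_deriv ?_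
  show u ⬝ᵥ (((a * 1) • (C * NormedSpace.exp ((a * t) • C))) *ᵥ v) = _
  rw [mul_one, smul_mulVec, dotProduct_smul, smul_eq_mul]

theorem pdU_exp_dotProduct {m : ℕ} (c : ℂ) (W : (Fin m → ℂ) → Fin m → ℂ) (j : Fin m)
    (u v : Fin m → ℂ) :
    pdU m j (fun u v => Complex.exp (c * u ⬝ᵥ W v)) u v =
      c * W v j * Complex.exp (c * u ⬝ᵥ W v) := by
  let L : (Fin m → ℂ) →L[ℂ] ℂ := LinearMap.toContinuousLinearMap
    { toFun := fun x => c * x ⬝ᵥ W v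
      map_add' := fun x y => by simp [add_dotProduct, mul_add]
      map_smul' := fun b x => by simp [smul_dotProduct]; ring }
  have h : HasFDerivAt (fun x => Complex.exp (c * x ⬝ᵥ W v)) (Complex.exp (L u) • L) u :=
    (Complex.hasDerivAt_exp (L u)).comp_hasFDerivAt u L.hasFDerivAt
  rw [pdU, h.fderiv]
  simp only [_root_.smul_apply, LinearMap.coe_toContinuousLinearMap', L,
    LinearMap.coe_mk, AddHom.coe_mk, single_dotProduct, one_mul, smul_eq_mul]
  ring

theorem statement8_general (ℏ : ℝ) (hℏ : 0 < ℏ) (m : ℕ)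
    (C : Matrix (Fin m) (Fin m) ℂ) :
    -- F(0,u,v) = 1
    (∀ u v : Fin m → ℂ, starExpC ℏ m C 0 u v = 1) ∧
    -- F solves the evolution equation of the star-exponential
    (∀ (t : ℂ) (u v : Fin m → ℂ),
      HasDerivAt (fun s => starExpC ℏ m C s u v)
        ((Complex.I / (Complex.I * ℏ)) *
          ((∑ k, ∑ l, C k l * u k * v l) * starExpC ℏ m C t u v +
            (Complex.I * ℏ) *
              ∑ j, (∑ k, C k j * u k) * pdU m j (starExpC ℏ m C t) u v)) t) := by
  unfold starExpC
  simp only [sum_sum_mul_mul_eq_dotProduct_mulVec, pdU_exp_dotProduct]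
  refine ⟨fun u v => by simp [NormedSpace.exp_zero], fun t u v => ?_⟩
  set c : ℂ := 1 / (Complex.I * ℏ) with hc
  set E := NormedSpace.exp ((Complex.I * t) • C)
  set F := Complex.exp (c * u ⬝ᵥ ((E - 1) *ᵥ v))
  have hexponent : HasDerivAt
      (fun s => c * u ⬝ᵥ ((NormedSpace.exp ((Complex.I * s) • C) - 1) *ᵥ v))
      (c * (Complex.I * u ⬝ᵥ ((C * E) *ᵥ v))) t := by
    simpa only [sub_mulVec, one_mulVec, dotProduct_sub] using
      ((hasDerivAt_dotProduct_exp_smul_mulVec Complex.I C u v t).sub_const (u ⬝ᵥ v)).const_mul c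
  have hsum : ∑ j, (∑ k, C k j * u k) * (c * ((E - 1) *ᵥ v) j * F) =
      c * F * (u ⬝ᵥ ((C * E) *ᵥ v) - u ⬝ᵥ (C *ᵥ v)) := by
    calc ∑ j, (∑ k, C k j * u k) * (c * ((E - 1) *ᵥ v) j * F)
        = c * F * ∑ j, (∑ k, C k j * u k) * ((E - 1) *ᵥ v) j := by
          rw [Finset.mul_sum]
          exact Finset.sum_congr rfl fun j _ => by ring
      _ = c * F * (u ⬝ᵥ ((C * E) *ᵥ v) - u ⬝ᵥ (C *ᵥ v)) := by
          rw [sum_vecMul_mul_eq_dotProduct_mulVec, mulVec_mulVec, mul_sub, mul_one, sub_mulVec,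
            dotProduct_sub]
  have hcI : c * (Complex.I * ℏ) = 1 :=
    one_div_mul_cancel (mul_ne_zero Complex.I_ne_zero (by exact_mod_cast hℏ.ne'))
  refine hexponent.cexp.congr_deriv ?_
  rw [hsum, div_eq_mul_one_div Complex.I, ← hc]
  linear_combination (-(Complex.I * c * F * (u ⬝ᵥ ((C * E) *ᵥ v) - u ⬝ᵥ (C *ᵥ v)))) * hcI

theorem statement8 (ℏ : ℝ) (hℏ : 0 < ℏ) (m : ℕ) (hm : 1 ≤ m)
    (C : Matrix (Fin m) (Fin m) ℂ) :
    -- F(0,u,v) = 1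
    (∀ u v : Fin m → ℂ, starExpC ℏ m C 0 u v = 1) ∧
    -- F solves the evolution equation of the star-exponential
    (∀ (t : ℂ) (u v : Fin m → ℂ),
      HasDerivAt (fun s => starExpC ℏ m C s u v)
        ((Complex.I / (Complex.I * ℏ)) *
          ((∑ k, ∑ l, C k l * u k * v l) * starExpC ℏ m C t u v +
            (Complex.I * ℏ) *
              ∑ j, (∑ k, C k j * u k) * pdU m j (starExpC ℏ m C t) u v)) t) :=
  statement8_general ℏ hℏ m C
end

section
/- Let ℏ > 0, let D ∈ ℂ with D ≠ 0, and let δ ∈ ℂ be a square root of D. Define f(t,x) = (1/cos(ℏδt))·exp((tan(ℏδt)/(ℏδ))·x) for all t ∈ ℂ with cos(ℏδt) ≠ 0 and all x ∈ ℂ. Then f(0,x) = 1 for all x, the formula is independent of the choice of square root δ, and f satisfies the partial differential equation ∂_t f(t,x) = x·f(t,x) + ℏ²D·(∂_x f(t,x) + x·∂²_x f(t,x)) wherever it is defined. -/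
/-!
With `a = ℏδ`, `T = tan (a t)` and `f = weylExpQuad ℏ δ t x`, one has `∂ₓ f = (T / a) f` and
`∂ₜ f = (a T + x (1 + T²)) f`, since `sec' = sec · tan` and `tan' = 1 + tan²`. The PDE is then the
identity `a T + x (1 + T²) = x + a² (T / a + x (T / a)²)`, where `a² = ℏ² D`. The formula is even
in `δ` because `cos` is even and `tan` is odd, so it only depends on `δ² = D`.
-/

/-- The Weyl ordered expression of the star-exponential of a quadratic form with
discriminant `D = δ²`, as a function of `t` and `x = aũ² + bṽ² + 2cũṽ`. -/
noncomputable def weylExpQuad (ℏ : ℝ) (δ t x : ℂ) : ℂ :=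
  (Complex.cos (ℏ * δ * t))⁻¹ * Complex.exp ((Complex.tan (ℏ * δ * t) / (ℏ * δ)) * x)

open Complex

theorem Complex.hasDerivAt_inv_cos_mul_exp_tan_mul {z : ℂ} (c : ℂ) (hz : cos z ≠ 0) :
    HasDerivAt (fun w => (cos w)⁻¹ * exp (tan w * c))
      ((tan z + c * (1 + tan z ^ 2)) * ((cos z)⁻¹ * exp (tan z * c))) z := by
  have hsec : HasDerivAt (fun w => (cos w)⁻¹) (-(-sin z) / cos z ^ 2) z :=
    (hasDerivAt_cos z).inv hz
  have hexp : HasDerivAt (fun w => exp (tan w * c)) (exp (tan z * c) * (1 / cos z ^ 2 * c)) z :=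
    ((hasDerivAt_tan hz).mul_const c).cexp
  refine (hsec.mul hexp).congr_deriv ?_
  have hsec_sq : 1 / cos z ^ 2 = 1 + tan z ^ 2 := by
    rw [one_div, ← inv_one_add_tan_sq hz, inv_inv]
  rw [← tan_mul_cos hz, hsec_sq]
  field_simp

section

variable (ℏ : ℝ) (δ : ℂ)

@[simp]
theorem weylExpQuad_zero_left (x : ℂ) : weylExpQuad ℏ δ 0 x = 1 := by
  simp [weylExpQuad]

theorem weylExpQuad_neg (t x : ℂ) : weylExpQuad ℏ (-δ) t x = weylExpQuad ℏ δ t x := by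
  simp [weylExpQuad, cos_neg, tan_neg, neg_div_neg_eq]

theorem weylExpQuad_eq_of_sq_eq {δ' : ℂ} (h : δ' ^ 2 = δ ^ 2) (t x : ℂ) :
    weylExpQuad ℏ δ' t x = weylExpQuad ℏ δ t x := by
  rcases sq_eq_sq_iff_eq_or_eq_neg.1 h with rfl | rfl
  · rfl
  · exact weylExpQuad_neg ℏ δ t x

theorem hasDerivAt_weylExpQuad_right (t x : ℂ) :
    HasDerivAt (weylExpQuad ℏ δ t)
      (tan (ℏ * δ * t) / (ℏ * δ) * weylExpQuad ℏ δ t x) x := by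
  have h := (((hasDerivAt_id x).const_mul (tan (ℏ * δ * t) / (ℏ * δ))).cexp).const_mul
    (cos (ℏ * δ * t))⁻¹
  refine h.congr_deriv ?_
  simp only [weylExpQuad, id, mul_one]
  ring

theorem deriv_weylExpQuad_right (t : ℂ) :
    deriv (weylExpQuad ℏ δ t) = fun x => tan (ℏ * δ * t) / (ℏ * δ) * weylExpQuad ℏ δ t x :=
  funext fun x => (hasDerivAt_weylExpQuad_right ℏ δ t x).deriv

theorem deriv_deriv_weylExpQuad_right (t x : ℂ) :
    deriv (deriv (weylExpQuad ℏ δ t)) x =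
      (tan (ℏ * δ * t) / (ℏ * δ)) ^ 2 * weylExpQuad ℏ δ t x := by
  rw [deriv_weylExpQuad_right, deriv_const_mul_field', deriv_weylExpQuad_right]
  ring

theorem hasDerivAt_weylExpQuad_left (hℏδ : (ℏ : ℂ) * δ ≠ 0) {t : ℂ} (x : ℂ)
    (hcos : cos (ℏ * δ * t) ≠ 0) :
    HasDerivAt (fun s => weylExpQuad ℏ δ s x)
      ((ℏ * δ * tan (ℏ * δ * t) + x * (1 + tan (ℏ * δ * t) ^ 2)) * weylExpQuad ℏ δ t x) t := by
  have hlin : HasDerivAt (fun s => (ℏ : ℂ) * δ * s) (ℏ * δ) t := by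
    simpa using (hasDerivAt_id t).const_mul ((ℏ : ℂ) * δ)
  have h := (hasDerivAt_inv_cos_mul_exp_tan_mul (x / (ℏ * δ)) hcos).comp t hlin
  have hf : (fun s => weylExpQuad ℏ δ s x) =
      (fun w => (cos w)⁻¹ * exp (tan w * (x / (ℏ * δ)))) ∘ fun s => (ℏ : ℂ) * δ * s := by
    funext s
    simp only [weylExpQuad, Function.comp, mul_div_assoc', div_mul_eq_mul_div]
  rw [hf]
  refine h.congr_deriv ?_
  simp only [weylExpQuad]
  field_simp
  rw [mul_add, mul_div_cancel₀ _ hℏδ]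

end

theorem statement9 (ℏ : ℝ) (hℏ : 0 < ℏ) (D δ : ℂ) (hD : D ≠ 0) (hδ : δ ^ 2 = D) :
    (∀ x : ℂ, weylExpQuad ℏ δ 0 x = 1) ∧
    (∀ δ' : ℂ, δ' ^ 2 = D → ∀ t x : ℂ, weylExpQuad ℏ δ' t x = weylExpQuad ℏ δ t x) ∧
    (∀ t x : ℂ, Complex.cos (ℏ * δ * t) ≠ 0 →
      HasDerivAt (fun s => weylExpQuad ℏ δ s x)
        (x * weylExpQuad ℏ δ t x + (ℏ : ℂ) ^ 2 * D *
          (deriv (fun y => weylExpQuad ℏ δ t y) x +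
            x * deriv (deriv (fun y => weylExpQuad ℏ δ t y)) x)) t) := by
  have hℏ0 : (ℏ : ℂ) ≠ 0 := by exact_mod_cast hℏ.ne'
  have hδ0 : δ ≠ 0 := ne_zero_pow two_ne_zero (hδ ▸ hD)
  have hℏδ : (ℏ : ℂ) * δ ≠ 0 := mul_ne_zero hℏ0 hδ0
  refine ⟨weylExpQuad_zero_left ℏ δ, fun δ' hδ' => weylExpQuad_eq_of_sq_eq ℏ δ (hδ'.trans hδ.symm),
    fun t x hcos => ?_⟩
  refine (hasDerivAt_weylExpQuad_left ℏ δ hℏδ x hcos).congr_deriv ?_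
  rw [deriv_deriv_weylExpQuad_right, deriv_weylExpQuad_right, ← hδ]
  field_simp
  ring
end

section
/- Let ℏ > 0 and for t ∈ ℂ define g_t(u,v) = exp(((e^{it} − 1)/(iℏ))·u·v) on ℂ² (the normal ordered expression of the star-exponential e_*^{(it/(iℏ)) u*v}; the normal ordered expression of e_*^{(it/(iℏ)) v*u} is e^{it}·g_t). Then the bumping identities hold in the normal ordered expression: v·g_t + iℏ·∂_u g_t = e^{it}·g_t·v and g_t·u + iℏ·∂_v g_t = e^{it}·u·g_t; equivalently, v *_{K₀} g_t = (e^{it}g_t) *_{K₀} v and g_t *_{K₀} u = u *_{K₀} (e^{it}g_t), which are the K₀-expressions of v * e_*^{(it/(iℏ))u*v} = e_*^{(it/(iℏ))v*u} * v and e_*^{(it/(iℏ))u*v} * u = u * e_*^{(it/(iℏ))v*u}. -/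
/-! Both identities come from differentiating `exp (c u v)`: `∂_u` brings down the factor `c v`,
so `v g + iℏ ∂_u g = (1 + iℏ c) g v`, and the coefficient `c = (e^{it} - 1)/(iℏ)` is exactly the
one with `1 + iℏ c = e^{it}`. The second identity is the same computation in `v`. -/

/-- The normal ordered expression of the star-exponential `e_*^{(it/(iℏ)) u*v}`. -/
noncomputable def normalExp (ℏ : ℝ) (t u v : ℂ) : ℂ :=
  Complex.exp (((Complex.exp (Complex.I * t) - 1) / (Complex.I * ℏ)) * (u * v))

open Complex

lemma deriv_cexp_mul_mul_left (c u v : ℂ) :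
    deriv (fun w => cexp (c * (w * v))) u = c * v * cexp (c * (u * v)) := by
  have h := ((hasDerivAt_id u).mul_const v |>.const_mul c).cexp
  simpa [mul_comm, mul_left_comm, mul_assoc] using h.deriv

lemma deriv_cexp_mul_mul_right (c u v : ℂ) :
    deriv (fun w => cexp (c * (u * w))) v = c * u * cexp (c * (u * v)) := by
  simpa only [mul_comm u] using deriv_cexp_mul_mul_left c v u

lemma mul_add_deriv_cexp_mul_mul_left (c κ u v : ℂ) :
    v * cexp (c * (u * v)) + κ * deriv (fun w => cexp (c * (w * v))) u
      = (1 + κ * c) * cexp (c * (u * v)) * v := by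
  rw [deriv_cexp_mul_mul_left]; ring

lemma cexp_mul_add_deriv_cexp_mul_mul_right (c κ u v : ℂ) :
    cexp (c * (u * v)) * u + κ * deriv (fun w => cexp (c * (u * w))) v
      = (1 + κ * c) * u * cexp (c * (u * v)) := by
  rw [deriv_cexp_mul_mul_right]; ring

lemma one_add_mul_div_cancel {κ : ℂ} (hκ : κ ≠ 0) (z : ℂ) : 1 + κ * ((z - 1) / κ) = z := by
  rw [mul_div_cancel₀ _ hκ]; ring

theorem statement17 (ℏ : ℝ) (hℏ : 0 < ℏ) :
    ∀ t u v : ℂ,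
      (v * normalExp ℏ t u v + (Complex.I * ℏ) * deriv (fun w => normalExp ℏ t w v) u
        = Complex.exp (Complex.I * t) * normalExp ℏ t u v * v) ∧
      (normalExp ℏ t u v * u + (Complex.I * ℏ) * deriv (fun w => normalExp ℏ t u w) v
        = Complex.exp (Complex.I * t) * u * normalExp ℏ t u v) := by
  intro t u v
  have hiℏ : I * ℏ ≠ 0 := mul_ne_zero I_ne_zero (ofReal_ne_zero.mpr hℏ.ne')
  have hcoeff := one_add_mul_div_cancel hiℏ (cexp (I * t))
  unfold normalExp
  exact ⟨by rw [mul_add_deriv_cexp_mul_mul_left, hcoeff],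
    by rw [cexp_mul_add_deriv_cexp_mul_mul_right, hcoeff]⟩
end

section
/- Let α, β ∈ ℂ satisfy Re α = Re β > 0 and Im(α − β) > 0. Then Re α > 0, and for every integer ℓ ≥ 1 one has α + (ℓ−1)β ≠ 0 and Re((α − β)·(1 + β/(α + (ℓ−1)β))) > 0. -/
theorem statement18 (α β : ℂ) (hre : α.re = β.re) (hpos : 0 < β.re)
    (him : 0 < (α - β).im) :
    0 < α.re ∧
    ∀ ℓ : ℕ, 1 ≤ ℓ →
      α + ((ℓ : ℂ) - 1) * β ≠ 0 ∧
      0 < ((α - β) * (1 + β / (α + ((ℓ : ℂ) - 1) * β))).re := by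
  refine ⟨by rw [hre]; exact hpos, fun ℓ hℓ => ?_⟩
  set γ := α + ((ℓ : ℂ) - 1) * β with hγ
  have hℓr : (1 : ℝ) ≤ (ℓ : ℝ) := by exact_mod_cast hℓ
  have hγre : γ.re = (ℓ : ℝ) * β.re := by
    simp [hγ, Complex.add_re, Complex.mul_re, Complex.sub_re, Complex.sub_im, hre]
    ring
  have hγim : γ.im = (ℓ : ℝ) * β.im + (α - β).im := by
    simp [hγ, Complex.add_im, Complex.mul_im, Complex.sub_re, Complex.sub_im]
    ring
  have hγrepos : 0 < γ.re := by
    rw [hγre]; positivity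
  have hγne : γ ≠ 0 := fun h => by simp [h] at hγrepos
  refine ⟨hγne, ?_⟩
  have hns : 0 < Complex.normSq γ := Complex.normSq_pos.mpr hγne
  have hre0 : (α - β).re = 0 := by simp [Complex.sub_re, hre]
  rw [Complex.mul_re, hre0, Complex.add_im, Complex.div_im, hγre, hγim]
  have him0 : Complex.I.im = 1 := Complex.I_im
  have : β.im * ((ℓ : ℝ) * β.re) / Complex.normSq γ -
      β.re * ((ℓ : ℝ) * β.im + (α - β).im) / Complex.normSq γ
      = -(β.re * (α - β).im) / Complex.normSq γ := by
    field_simp; ring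
  rw [this]
  simp only [zero_mul, zero_sub, Complex.one_im, zero_add, neg_div, mul_neg, neg_neg]
  positivity
end
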